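/- The letter densities in the words y_n converge: lim_{n→∞} α_n/|y_n| = (3 − √5)/4 and lim_{n→∞} β_n/|y_n| = (√5 − 1)/4, where α_n and β_n are the number of occurrences of the letters 1 and 2 in y_n. -/

import Mathlib

/-!
Both the length and the letter counts of `y n` obey the Fibonacci recursion, so
`|y n| = 2 F(n+1)`, `β n = F n` and `α (n+1) = F n`. The densities are therefore halves of
ratios `F n / F (n+k)`, which tend to `φ⁻ᵏ` by Binet's formula, and `φ⁻¹ = -ψ`.
-/

/-- The words `y 0 = 01`, `y 1 = 02`, `y n = y (n-1) ++ y (n-2)` over `{0,1,2}`. -/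
def yWord : ℕ → List ℕ
  | 0 => [0, 1]
  | 1 => [0, 2]
  | (n + 2) => yWord (n + 1) ++ yWord n

open Filter Topology Real goldenRatio

lemma yWord_length : ∀ n, (yWord n).length = 2 * Nat.fib (n + 1)
  | 0 => rfl
  | 1 => rfl
  | (n + 2) => by
      simp only [yWord, List.length_append, yWord_length (n + 1), yWord_length n,
        Nat.fib_add_two]
      ring

lemma yWord_count_two : ∀ n, (yWord n).count 2 = Nat.fib n
  | 0 => rfl
  | 1 => rfl
  | (n + 2) => by
      simp only [yWord, List.count_append, yWord_count_two (n + 1), yWord_count_two n,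
        Nat.fib_add_two]
      ring

lemma yWord_succ_count_one : ∀ n, (yWord (n + 1)).count 1 = Nat.fib n
  | 0 => rfl
  | 1 => rfl
  | (n + 2) => by
      rw [yWord, List.count_append, yWord_succ_count_one (n + 1), yWord_succ_count_one n,
        Nat.fib_add_two, add_comm]

lemma tendsto_fib_div_goldenRatio_pow :
    Tendsto (fun n => (Nat.fib n : ℝ) / φ ^ n) atTop (𝓝 (√5)⁻¹) := by
  have hratio : |ψ / φ| < 1 := by
    rw [abs_div, abs_of_pos goldenRatio_pos, div_lt_one goldenRatio_pos,
      abs_of_neg goldenConj_neg]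
    linarith [goldenRatio_add_goldenConj, one_lt_goldenRatio]
  have hlim := ((tendsto_pow_atTop_nhds_zero_of_abs_lt_one hratio).const_sub 1).div_const √5
  rw [sub_zero, one_div] at hlim
  refine hlim.congr fun n => ?_
  rw [coe_fib_eq, div_pow, div_right_comm (φ ^ n - ψ ^ n), sub_div (φ ^ n),
    div_self (pow_ne_zero n goldenRatio_ne_zero)]

lemma tendsto_fib_div_fib_add (k : ℕ) :
    Tendsto (fun n => (Nat.fib n : ℝ) / Nat.fib (n + k)) atTop (𝓝 (φ ^ k)⁻¹) := by
  have hbinet := tendsto_fib_div_goldenRatio_pow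
  have hlim := (hbinet.div (hbinet.comp (tendsto_add_atTop_nat k)) (by positivity)).mul_const
    (φ ^ k)⁻¹
  rw [div_self (by positivity), one_mul] at hlim
  refine hlim.congr' ((eventually_ge_atTop 1).mono fun n hn => ?_)
  have hfib : (Nat.fib (n + k) : ℝ) ≠ 0 := by
    exact_mod_cast (Nat.fib_pos.mpr (by omega)).ne'
  have hφ : φ ≠ 0 := goldenRatio_ne_zero
  simp only [Pi.div_apply, Function.comp_apply, pow_add]
  field_simp

theorem yWord_letter_densities :
    Filter.Tendsto (fun n => ((yWord n).count 1 : ℝ) / ((yWord n).length : ℝ))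
        Filter.atTop (nhds ((3 - Real.sqrt 5) / 4)) ∧
      Filter.Tendsto (fun n => ((yWord n).count 2 : ℝ) / ((yWord n).length : ℝ))
        Filter.atTop (nhds ((Real.sqrt 5 - 1) / 4)) := by
  have hdensity (k : ℕ) (n : ℕ) :
      (Nat.fib n : ℝ) / (2 * Nat.fib (n + k) : ℕ) = Nat.fib n / Nat.fib (n + k) / 2 := by
    push_cast
    rw [div_div, mul_comm]
  constructor
  · rw [← tendsto_add_atTop_iff_nat 1]
    convert (tendsto_fib_div_fib_add 2).div_const 2 using 2 with n
    · rw [yWord_succ_count_one, yWord_length]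
      exact hdensity 2 n
    · rw [← inv_pow, inv_goldenRatio, neg_sq, goldenConj_sq, goldenConj]
      ring
  · convert (tendsto_fib_div_fib_add 1).div_const 2 using 2 with n
    · rw [yWord_count_two, yWord_length]
      exact hdensity 1 n
    · rw [pow_one, inv_goldenRatio, goldenConj]
      ring
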